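/- arXiv:2112.03156 — 2 statements merged into one kernel-verified Lean document; each statement's English description precedes it below -/
import Mathlib

section
/- Let R = F₂[x₁, x₂, x₃, …] be the polynomial ring over the field with two elements in countably many variables. For a finite subset I of {2, 3, 4, …}, define c(I) := ∑_{i∈I} x_{i-1}² · ∏_{j ∈ I∖{i}} x_j (so c(∅) = 0, and c({i}) = x_{i-1}²). Then for all finite subsets I, J of {2, 3, …}: c(I)·c(J) = ∑_{i ∈ I∩J} c({i}) · c((IΔJ) ∪ {i}) · ∏_{j ∈ (I∩J)∖{i}} c({j+1}) + ∑_{i ∈ I∖J} c({i}) · c((IΔJ)∖{i}) · ∏_{j ∈ I∩J} c({j+1}), where IΔJ is the symmetric difference. -/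
open MvPolynomial

/-- The element `c(I) = ∑_{i∈I} x_{i-1}² ∏_{j∈I∖{i}} x_j` in `F₂[x₁,x₂,…]`. -/
noncomputable def cElt (I : Finset ℕ) : MvPolynomial ℕ (ZMod 2) :=
  ∑ i ∈ I, (X (i - 1)) ^ 2 * ∏ j ∈ I.erase i, X j

/-!
With `x_S = ∏_{j∈S} x_j` and `D` the derivation of `F₂[x₁,x₂,…]` with `D x_i = x_{i-1}²`,
the Leibniz rule gives `c(I) = D x_I`. In characteristic 2, `D` kills squares, and `D ∘ D`
is again a derivation, vanishing on the generators, hence `D ∘ D = 0`; so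
`D (a · D b) = D a · D b`. Writing `k, a, b` for `x_{I∩J}, x_{I∖J}, x_{J∖I}`, this collapses
the first sum on the right to `D k · D (k a b)` and the second to `k² · D a · D b`, and these
add up to `D (k a) · D (k b) = c(I) c(J)`.
-/

namespace Derivation

variable {R A : Type*} [CommSemiring R] [CommRing A] [Algebra R A] (D : Derivation R A A)
variable {ι : Type*} [DecidableEq ι]

theorem leibniz_finsetProd (s : Finset ι) (f : ι → A) :
    D (∏ i ∈ s, f i) = ∑ i ∈ s, (∏ j ∈ s.erase i, f j) * D (f i) := by
  induction s using Finset.induction_on with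
  | empty => simp
  | insert a s ha ih =>
    have herase : ∀ i ∈ s, (∏ j ∈ (insert a s).erase i, f j) * D (f i) =
        f a * ((∏ j ∈ s.erase i, f j) * D (f i)) := fun i hi => by
      rw [Finset.erase_insert_of_ne (ne_of_mem_of_not_mem hi ha).symm,
        Finset.prod_insert fun h => ha (Finset.mem_of_mem_erase h), mul_assoc]
    rw [Finset.prod_insert ha, leibniz, ih, Finset.sum_insert ha, Finset.erase_insert ha,
      Finset.sum_congr rfl herase, smul_eq_mul, smul_eq_mul, Finset.mul_sum, add_comm]

theorem map_sq_eq_zero [CharP A 2] (a : A) : D (a ^ 2) = 0 := by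
  simp [CharTwo.two_eq_zero]

theorem map_sq_mul [CharP A 2] (a b : A) : D (a ^ 2 * b) = a ^ 2 * D b := by
  rw [leibniz, map_sq_eq_zero, smul_zero, add_zero, smul_eq_mul]

variable {D}

theorem map_mul_map {b : A} (hb : D (D b) = 0) (a : A) : D (a * D b) = D a * D b := by
  simp [hb, mul_comm]

theorem sum_map_mul_map_prod_erase_mul (hD : ∀ a, D (D a) = 0) (s : Finset ι) (f : ι → A)
    (g : A) :
    ∑ i ∈ s, D (f i) * D ((∏ j ∈ s.erase i, f j) * g) = D (∏ i ∈ s, f i) * D g := by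
  calc ∑ i ∈ s, D (f i) * D ((∏ j ∈ s.erase i, f j) * g)
      = D (g * D (∏ i ∈ s, f i)) := by
        simp only [leibniz_finsetProd, Finset.mul_sum, map_sum, ← mul_assoc, map_mul_map (hD _)]
        exact Finset.sum_congr rfl fun i _ => by rw [mul_comm g, mul_comm]
    _ = D (∏ i ∈ s, f i) * D g := by rw [map_mul_map (hD _), mul_comm]

theorem sum_map_mul_map_mul_mul_prod_erase_sq [CharP A 2] (hD : ∀ a, D (D a) = 0)
    (s : Finset ι) (f : ι → A) (g : A) :
    ∑ i ∈ s, D (f i) * D (f i * g) * (∏ j ∈ s.erase i, f j) ^ 2 =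
      D (∏ i ∈ s, f i) * D ((∏ i ∈ s, f i) * g) := by
  have hterm : ∀ i ∈ s, D (f i) * D (f i * g) * (∏ j ∈ s.erase i, f j) ^ 2 =
      D ((∏ i ∈ s, f i) * g * ((∏ j ∈ s.erase i, f j) * D (f i))) := fun i hi => by
    rw [← Finset.mul_prod_erase s f hi,
      show f i * (∏ j ∈ s.erase i, f j) * g * ((∏ j ∈ s.erase i, f j) * D (f i)) =
        (∏ j ∈ s.erase i, f j) ^ 2 * (f i * g * D (f i)) by ring,
      map_sq_mul, map_mul_map (hD _)]
    ring
  rw [Finset.sum_congr rfl hterm, ← map_sum, ← Finset.mul_sum, ← leibniz_finsetProd,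
    map_mul_map (hD _), mul_comm]

theorem map_prod_mul_map_prod [CharP A 2] (hD : ∀ a, D (D a) = 0) (f : ι → A)
    (I J : Finset ι) :
    D (∏ i ∈ I, f i) * D (∏ j ∈ J, f j) =
      ∑ i ∈ I ∩ J, D (f i) * D (∏ j ∈ insert i (symmDiff I J), f j) *
        (∏ j ∈ (I ∩ J).erase i, f j) ^ 2 +
      ∑ i ∈ I \ J, D (f i) * D (∏ j ∈ (symmDiff I J).erase i, f j) *
        (∏ j ∈ I ∩ J, f j) ^ 2 := by
  set k := ∏ j ∈ I ∩ J, f j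
  set a := ∏ j ∈ I \ J, f j
  set b := ∏ j ∈ J \ I, f j
  have hI : ∏ i ∈ I, f i = k * a := (Finset.prod_inter_mul_prod_sdiff I J f).symm
  have hJ : ∏ j ∈ J, f j = k * b := by
    rw [← Finset.prod_inter_mul_prod_sdiff J I f, Finset.inter_comm]
  have hsymmDiff : symmDiff I J = I \ J ∪ J \ I := Finset.symmDiff_def I J
  have hdisj : Disjoint (I \ J) (J \ I) := disjoint_sdiff_sdiff
  have hfirst : ∑ i ∈ I ∩ J, D (f i) * D (∏ j ∈ insert i (symmDiff I J), f j) *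
      (∏ j ∈ (I ∩ J).erase i, f j) ^ 2 = D k * D (k * (a * b)) := by
    rw [← sum_map_mul_map_mul_mul_prod_erase_sq hD]
    refine Finset.sum_congr rfl fun i hi => ?_
    have hi' : i ∉ symmDiff I J := by
      rw [Finset.mem_inter] at hi; simp [Finset.mem_symmDiff, hi]
    rw [Finset.prod_insert hi', hsymmDiff, Finset.prod_union hdisj]
  have hsecond : ∑ i ∈ I \ J, D (f i) * D (∏ j ∈ (symmDiff I J).erase i, f j) * k ^ 2 =
      D a * D b * k ^ 2 := by
    rw [← sum_map_mul_map_prod_erase_mul hD, Finset.sum_mul]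
    refine Finset.sum_congr rfl fun i hi => ?_
    have hi' : i ∉ J \ I := fun h => (Finset.mem_sdiff.mp h).2 (Finset.mem_sdiff.mp hi).1
    rw [hsymmDiff, Finset.erase_union_distrib, Finset.erase_eq_of_notMem hi',
      Finset.prod_union (Finset.disjoint_of_subset_left (Finset.erase_subset _ _) hdisj)]
  rw [hI, hJ, hfirst, hsecond]
  simp only [leibniz, smul_eq_mul]
  ring

end Derivation

namespace MvPolynomial

theorem derivation_map_map_eq_zero {σ R : Type*} [CommRing R] [CharP R 2]
    {D : Derivation R (MvPolynomial σ R) (MvPolynomial σ R)} (h : ∀ i, D (D (X i)) = 0)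
    (p : MvPolynomial σ R) : D (D p) = 0 := by
  induction p using MvPolynomial.induction_on with
  | C a => rw [← algebraMap_eq, D.map_algebraMap, map_zero]
  | add p q hp hq => rw [map_add, map_add, hp, hq, add_zero]
  | mul_X p i hp =>
    simp only [Derivation.leibniz, smul_eq_mul, map_add, hp, h, mul_zero, zero_add]
    rw [mul_comm]
    exact CharTwo.add_self_eq_zero _

noncomputable def sqTwoDerivation :
    Derivation (ZMod 2) (MvPolynomial ℕ (ZMod 2)) (MvPolynomial ℕ (ZMod 2)) :=
  mkDerivation _ fun i => X (i - 1) ^ 2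

@[simp]
theorem sqTwoDerivation_X (i : ℕ) : sqTwoDerivation (X i) = X (i - 1) ^ 2 :=
  mkDerivation_X _ _ i

theorem sqTwoDerivation_sqTwoDerivation (p : MvPolynomial ℕ (ZMod 2)) :
    sqTwoDerivation (sqTwoDerivation p) = 0 :=
  derivation_map_map_eq_zero (fun i => by rw [sqTwoDerivation_X, Derivation.map_sq_eq_zero]) p

end MvPolynomial

theorem cElt_eq_sqTwoDerivation (I : Finset ℕ) : cElt I = sqTwoDerivation (∏ j ∈ I, X j) := by
  simp [cElt, Derivation.leibniz_finsetProd, mul_comm]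

theorem stmt_2_general (I J : Finset ℕ) :
    cElt I * cElt J =
      (∑ i ∈ I ∩ J, cElt {i} * cElt (insert i (symmDiff I J)) *
        ∏ j ∈ (I ∩ J).erase i, cElt {j + 1}) +
      ∑ i ∈ I \ J, cElt {i} * cElt ((symmDiff I J).erase i) *
        ∏ j ∈ I ∩ J, cElt {j + 1} := by
  have hsucc : ∀ j, cElt {j + 1} = X j ^ 2 := fun j => by simp [cElt]
  simp only [hsucc, Finset.prod_pow]
  simp only [cElt_eq_sqTwoDerivation, Finset.prod_singleton]
  exact Derivation.map_prod_mul_map_prod sqTwoDerivation_sqTwoDerivation X I J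

theorem stmt_2 (I J : Finset ℕ) (hI : ∀ i ∈ I, 2 ≤ i) (hJ : ∀ j ∈ J, 2 ≤ j) :
    cElt I * cElt J =
      (∑ i ∈ I ∩ J, cElt {i} * cElt (insert i (symmDiff I J)) *
        ∏ j ∈ (I ∩ J).erase i, cElt {j + 1}) +
      ∑ i ∈ I \ J, cElt {i} * cElt ((symmDiff I J).erase i) *
        ∏ j ∈ I ∩ J, cElt {j + 1} :=
  stmt_2_general I J
end

section
/- Let R = F₂[y, x₂, x₃, x₄, …] be the polynomial ring over F₂ and let d : R → R be the unique F₂-derivation with d(y) = 0, d(x₂) = y, and d(x_i) = x_{i-1}² for all i ≥ 3. Then d ∘ d = 0 and ker d = F₂ · 1 + im d; that is, every polynomial killed by d is the sum of a constant and an element in the image of d. -/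
/-!
Put `u₀ = y`, `uₖ = x_{k+1}²` for `k ≥ 1`, and `vₖ = x_{k+2}`, so that `d vₖ = uₖ`, and every
`uₖ` is a cycle because `d (x²) = 2 x d x = 0`. Splitting each exponent of an `x_i` into its
even and odd part, every monomial is uniquely a product `∏ₖ uₖ^{nₖ} vₖ^{eₖ}` with `eₖ ∈ {0, 1}`,
so `R` is, as a complex, the tensor product over `k` of the complexes `F₂[uₖ] ⊗ Λ(vₖ)`. Each of
these contracts onto `F₂` by `uⁿ ↦ uⁿ⁻¹ v`, and a contracting homotopy of the product applies
this contraction in the first factor of a monomial that is not `1`. Hence `d h + h d = 1 - ε`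
with `ε` the constant coefficient, and a cycle `p` equals `ε p + d (h p)`.
-/

open MvPolynomial

/-- `R = F₂[y, x₂, x₃, …]`: the variable indexed by `1` is `y`, and the variable
indexed by `i ≥ 2` is `x_i`. -/
abbrev RP : Type := MvPolynomial {n : ℕ // 0 < n} (ZMod 2)

theorem derivation_derivation_eq_zero_of_charTwo {σ R : Type*} [CommRing R] [CharP R 2]
    (d : Derivation R (MvPolynomial σ R) (MvPolynomial σ R)) (h : ∀ i, d (d (X i)) = 0)
    (p : MvPolynomial σ R) : d (d p) = 0 := by
  induction p using MvPolynomial.induction_on with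
  | C a => simp
  | add p q hp hq => simp [hp, hq]
  | mul_X p i hp =>
    simp only [Derivation.leibniz, smul_eq_mul, map_add, h i, hp, mul_zero, zero_add,
      mul_comm (d (X i)) (d p), CharTwo.add_self_eq_zero]

theorem derivation_monomial_one_of_charTwo {σ R : Type*} [CommRing R] [CharP R 2]
    (d : Derivation R (MvPolynomial σ R) (MvPolynomial σ R)) (s : σ →₀ ℕ) :
    d (monomial s 1) =
      ∑ i ∈ s.support with s i % 2 = 1, monomial (s - Finsupp.single i 1) 1 * d (X i) := by
  rw [DFunLike.congr_fun (derivation_ext fun i => (mkDerivation_X R (fun i => d (X i)) i).symm),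
    mkDerivation_monomial, one_smul, Finsupp.sum, Finset.sum_filter]
  refine Finset.sum_congr rfl fun i _ => ?_
  rw [smul_eq_mul, CharP.cast_eq_mod R 2]
  rcases Nat.mod_two_eq_zero_or_one (s i) with h | h <;> simp [h]

namespace XiComplex

noncomputable section

-- `var 0` is `y` and `var (k + 1)` is `x_{k+2}`.
def var : ℕ ≃ {n : ℕ // 0 < n} where
  toFun k := ⟨k + 1, k.succ_pos⟩
  invFun i := i.1 - 1
  left_inv _ := rfl
  right_inv i := Subtype.ext (Nat.sub_add_cancel i.2)

abbrev Exponent : Type := {n : ℕ // 0 < n} →₀ ℕ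

-- The monomial with exponent `s` is `∏ₖ uₖ ^ uDeg s k * vₖ ^ vDeg s k`, and `uExp k` is the
-- exponent of `uₖ`.
def uExp (k : ℕ) : Exponent := Finsupp.single (var k) (if k = 0 then 1 else 2)

def uDeg (s : Exponent) (k : ℕ) : ℕ := if k = 0 then s (var 0) else s (var k) / 2

def vDeg (s : Exponent) (k : ℕ) : ℕ := s (var (k + 1)) % 2

-- `dFactor` replaces `vₖ` by `uₖ`, `hFactor` replaces `uₖ` by `vₖ`.
def dFactor (s : Exponent) (k : ℕ) : Exponent := s - Finsupp.single (var (k + 1)) 1 + uExp k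

def hFactor (s : Exponent) (k : ℕ) : Exponent := s + Finsupp.single (var (k + 1)) 1 - uExp k

def IsActive (s : Exponent) (k : ℕ) : Prop := uDeg s k ≠ 0 ∨ vDeg s k ≠ 0

def IsFirstActive (s : Exponent) (j : ℕ) : Prop := IsActive s j ∧ ∀ m < j, ¬ IsActive s m

lemma uExp_apply (k a : ℕ) : uExp k (var a) = if a = k then (if k = 0 then 1 else 2) else 0 := by
  simp [uExp, Finsupp.single_apply, eq_comm]

lemma dFactor_apply (s : Exponent) (k a : ℕ) :
    dFactor s k (var a) = s (var a) - (if a = k + 1 then 1 else 0) +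
      (if a = k then (if k = 0 then 1 else 2) else 0) := by
  simp [dFactor, uExp_apply, Finsupp.single_apply, eq_comm]

lemma hFactor_apply (s : Exponent) (k a : ℕ) :
    hFactor s k (var a) = s (var a) + (if a = k + 1 then 1 else 0) -
      (if a = k then (if k = 0 then 1 else 2) else 0) := by
  simp [hFactor, uExp_apply, Finsupp.single_apply, eq_comm]

lemma ext_uDeg_vDeg {s t : Exponent} (h : ∀ k, uDeg s k = uDeg t k ∧ vDeg s k = vDeg t k) :
    s = t := by
  ext i
  obtain ⟨a, rfl⟩ := var.surjective i
  rcases a with _ | a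
  · simpa [uDeg] using (h 0).1
  · have hu := (h (a + 1)).1
    have hv := (h a).2
    simp only [uDeg, vDeg, Nat.add_one_ne_zero, if_false] at hu hv
    omega

variable {s : Exponent} {j k m : ℕ}

lemma uDeg_dFactor (hk : vDeg s k = 1) :
    uDeg (dFactor s k) m = if m = k then uDeg s m + 1 else uDeg s m := by
  simp only [uDeg, vDeg, dFactor_apply] at hk ⊢
  split_ifs <;> subst_vars <;> first | contradiction | omega

lemma vDeg_dFactor (hk : vDeg s k = 1) :
    vDeg (dFactor s k) m = if m = k then 0 else vDeg s m := by
  simp only [vDeg, dFactor_apply, add_left_inj] at hk ⊢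
  split_ifs <;> subst_vars <;> first | contradiction | omega

lemma uDeg_hFactor (hk : vDeg s k = 0) (hu : uDeg s k ≠ 0) :
    uDeg (hFactor s k) m = if m = k then uDeg s m - 1 else uDeg s m := by
  simp only [uDeg, vDeg, hFactor_apply] at hk hu ⊢
  split_ifs at hu ⊢ <;> subst_vars <;> first | contradiction | omega

lemma vDeg_hFactor (hk : vDeg s k = 0) (hu : uDeg s k ≠ 0) :
    vDeg (hFactor s k) m = if m = k then 1 else vDeg s m := by
  simp only [uDeg, vDeg, hFactor_apply, add_left_inj] at hk hu ⊢
  split_ifs at hu ⊢ <;> subst_vars <;> first | contradiction | omega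

lemma hFactor_dFactor (hk : vDeg s k = 1) : hFactor (dFactor s k) k = s := by
  have hk' : vDeg (dFactor s k) k = 0 := by simp [vDeg_dFactor hk]
  have hu : uDeg (dFactor s k) k ≠ 0 := by simp [uDeg_dFactor hk]
  refine ext_uDeg_vDeg fun m => ?_
  rw [uDeg_hFactor hk' hu, vDeg_hFactor hk' hu, uDeg_dFactor hk, vDeg_dFactor hk]
  split_ifs with h <;> simp [h, hk]

lemma dFactor_hFactor (hk : vDeg s k = 0) (hu : uDeg s k ≠ 0) : dFactor (hFactor s k) k = s := by
  have hk' : vDeg (hFactor s k) k = 1 := by simp [vDeg_hFactor hk hu]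
  refine ext_uDeg_vDeg fun m => ?_
  rw [uDeg_dFactor hk', vDeg_dFactor hk', uDeg_hFactor hk hu, vDeg_hFactor hk hu]
  split_ifs with h
  · subst h
    exact ⟨Nat.sub_add_cancel (Nat.one_le_iff_ne_zero.2 hu), hk.symm⟩
  · exact ⟨rfl, rfl⟩

lemma dFactor_hFactor_comm (hj : vDeg s j = 0) (hu : uDeg s j ≠ 0) (hk : vDeg s k = 1)
    (hkj : k ≠ j) : dFactor (hFactor s j) k = hFactor (dFactor s k) j := by
  have hk' : vDeg (hFactor s j) k = 1 := by simp [vDeg_hFactor hj hu, hkj, hk]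
  have hj' : vDeg (dFactor s k) j = 0 := by simp [vDeg_dFactor hk, hkj.symm, hj]
  have hu' : uDeg (dFactor s k) j ≠ 0 := by simp [uDeg_dFactor hk, hkj.symm, hu]
  refine ext_uDeg_vDeg fun m => ?_
  rw [uDeg_dFactor hk', vDeg_dFactor hk', uDeg_hFactor hj hu, vDeg_hFactor hj hu,
    uDeg_hFactor hj' hu', vDeg_hFactor hj' hu', uDeg_dFactor hk, vDeg_dFactor hk]
  split_ifs <;> subst_vars <;> first | contradiction | simp

lemma exists_isFirstActive (hs : s ≠ 0) : ∃ j, IsFirstActive s j := by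
  classical
  have h : ∃ k, IsActive s k := by
    by_contra! h
    refine hs (ext_uDeg_vDeg fun k => ?_)
    simpa [IsActive, uDeg, vDeg] using h k
  exact ⟨Nat.find h, Nat.find_spec h, fun m => Nat.find_min h⟩

lemma isFirstActive_dFactor (hj : IsFirstActive s j) (hk : vDeg s k = 1) :
    IsFirstActive (dFactor s k) j := by
  have hjk : j ≤ k := not_lt.1 fun h => hj.2 k h (Or.inr (by omega))
  refine ⟨?_, fun m hm => ?_⟩
  · obtain rfl | hne := eq_or_ne j k
    · exact Or.inl (by simp [uDeg_dFactor hk])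
    · simpa [IsActive, uDeg_dFactor hk, vDeg_dFactor hk, hne] using hj.1
  · have hmk : m ≠ k := by omega
    simpa [IsActive, uDeg_dFactor hk, vDeg_dFactor hk, hmk] using hj.2 m hm

def oddFactors (s : Exponent) : Finset ℕ :=
  (s.support.filter fun i => s i % 2 = 1).preimage (fun k => var (k + 1))
    (var.injective.comp (add_left_injective 1)).injOn

lemma mem_oddFactors : k ∈ oddFactors s ↔ vDeg s k = 1 := by
  rw [oddFactors, Finset.mem_preimage, Finset.mem_filter, Finsupp.mem_support_iff, vDeg]
  omega

lemma oddFactors_hFactor (hj : vDeg s j = 0) (hu : uDeg s j ≠ 0) :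
    oddFactors (hFactor s j) = insert j (oddFactors s) := by
  ext k
  simp only [mem_oddFactors, Finset.mem_insert, vDeg_hFactor hj hu]
  split_ifs <;> simp_all

lemma oddFactors_uExp : oddFactors (uExp k) = ∅ := by
  ext m
  simp only [mem_oddFactors, vDeg, uExp_apply, Finset.notMem_empty, iff_false]
  split_ifs <;> simp_all

open scoped Classical in
def homotopyMono (s : Exponent) : RP :=
  if h : ∃ k, IsActive s k then
    if vDeg s (Nat.find h) = 0 then monomial (hFactor s (Nat.find h)) 1 else 0
  else 0

lemma homotopyMono_of_isFirstActive (hj : IsFirstActive s j) :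
    homotopyMono s = if vDeg s j = 0 then monomial (hFactor s j) 1 else 0 := by
  classical
  have h : ∃ k, IsActive s k := ⟨j, hj.1⟩
  have hfind : Nat.find h = j := (Nat.find_eq_iff h).2 hj
  rw [homotopyMono, dif_pos h, hfind]

lemma homotopyMono_zero : homotopyMono 0 = 0 :=
  dif_neg fun ⟨k, hk⟩ => by simp [IsActive, uDeg, vDeg] at hk

def homotopy : RP →ₗ[ZMod 2] RP := (basisMonomials _ _).constr (ZMod 2) homotopyMono

lemma homotopy_monomial (s : Exponent) (c : ZMod 2) :
    homotopy (monomial s c) = c • homotopyMono s := by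
  have hc : monomial s c = c • monomial s 1 := by rw [smul_monomial, smul_eq_mul, mul_one]
  rw [hc, map_smul]
  exact congrArg (c • ·) ((basisMonomials _ _).constr_basis (ZMod 2) homotopyMono s)

variable {d : Derivation (ZMod 2) RP RP}

lemma d_monomial_one (hy : d (X (var 0)) = 0)
    (hd : ∀ k, d (X (var (k + 1))) = monomial (uExp k) 1) (s : Exponent) :
    d (monomial s 1) = ∑ k ∈ oddFactors s, monomial (dFactor s k) 1 := by
  rw [derivation_monomial_one_of_charTwo, oddFactors,
    ← Finset.sum_preimage (fun k => var (k + 1)) _ (var.injective.comp (add_left_injective 1)).injOn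
      (fun i => monomial (s - Finsupp.single i 1) 1 * d (X i))]
  · simp only [hd, monomial_mul, mul_one, dFactor]
  · intro i _ hi
    obtain ⟨_ | k, rfl⟩ := var.surjective i
    · rw [hy, mul_zero]
    · exact absurd ⟨k, rfl⟩ hi

lemma d_d_X_eq_zero (hy : d (X (var 0)) = 0)
    (hd : ∀ k, d (X (var (k + 1))) = monomial (uExp k) 1) (i : {n : ℕ // 0 < n}) :
    d (d (X i)) = 0 := by
  obtain ⟨_ | k, rfl⟩ := var.surjective i
  · rw [hy, map_zero]
  · rw [hd, d_monomial_one hy hd, oddFactors_uExp, Finset.sum_empty]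

lemma d_homotopyMono_add_homotopy_d (hy : d (X (var 0)) = 0)
    (hd : ∀ k, d (X (var (k + 1))) = monomial (uExp k) 1) (hs : s ≠ 0) :
    d (homotopyMono s) + homotopy (d (monomial s 1)) = monomial s 1 := by
  obtain ⟨j, hj⟩ := exists_isFirstActive hs
  have hHd : homotopy (d (monomial s 1)) = ∑ k ∈ oddFactors s,
      if vDeg (dFactor s k) j = 0 then monomial (hFactor (dFactor s k) j) 1 else 0 := by
    rw [d_monomial_one hy hd, map_sum]
    refine Finset.sum_congr rfl fun k hk => ?_
    rw [homotopy_monomial, one_smul,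
      homotopyMono_of_isFirstActive (isFirstActive_dFactor hj (mem_oddFactors.1 hk))]
  rw [hHd, homotopyMono_of_isFirstActive hj]
  obtain hv | hv : vDeg s j = 0 ∨ vDeg s j = 1 := Nat.mod_two_eq_zero_or_one _
  · have hu : uDeg s j ≠ 0 := hj.1.resolve_right (not_not.2 hv)
    have hjs : j ∉ oddFactors s := by simp [mem_oddFactors, hv]
    have hcomm : ∀ k ∈ oddFactors s,
        (if vDeg (dFactor s k) j = 0 then monomial (hFactor (dFactor s k) j) 1 else 0) =
          monomial (dFactor (hFactor s j) k) (1 : ZMod 2) := fun k hk => by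
      have hkj : k ≠ j := ne_of_mem_of_not_mem hk hjs
      rw [vDeg_dFactor (mem_oddFactors.1 hk), if_neg hkj.symm, if_pos hv,
        dFactor_hFactor_comm hv hu (mem_oddFactors.1 hk) hkj]
    rw [if_pos hv, d_monomial_one hy hd, oddFactors_hFactor hv hu, Finset.sum_insert hjs,
      dFactor_hFactor hv hu, Finset.sum_congr rfl hcomm, add_assoc, CharTwo.add_self_eq_zero,
      add_zero]
  · rw [if_neg (by omega), map_zero, zero_add,
      Finset.sum_eq_single_of_mem j (mem_oddFactors.2 hv) fun k hk hkj => ?_]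
    · rw [vDeg_dFactor hv, if_pos rfl, if_pos rfl, hFactor_dFactor hv]
    · rw [vDeg_dFactor (mem_oddFactors.1 hk), if_neg hkj.symm, hv, if_neg one_ne_zero]

lemma d_homotopy_add_homotopy_d (hy : d (X (var 0)) = 0)
    (hd : ∀ k, d (X (var (k + 1))) = monomial (uExp k) 1) (p : RP) :
    d (homotopy p) + homotopy (d p) = p - C (constantCoeff p) := by
  induction p using MvPolynomial.induction_on' with
  | monomial s c =>
    rw [homotopy_monomial, constantCoeff_monomial]
    obtain rfl | hs := eq_or_ne s 0
    · rw [homotopyMono_zero, smul_zero, map_zero, zero_add, monomial_zero', derivation_C,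
        map_zero, if_pos rfl, sub_self]
    · have hc : monomial s c = c • monomial s 1 := by rw [smul_monomial, smul_eq_mul, mul_one]
      rw [if_neg hs, map_zero, sub_zero, hc, Derivation.map_smul, Derivation.map_smul, map_smul,
        ← smul_add, d_homotopyMono_add_homotopy_d hy hd hs]
  | add p q hp hq =>
    simp only [map_add]
    linear_combination hp + hq

end

end XiComplex

theorem stmt_10 (d : Derivation (ZMod 2) RP RP)
    (hy : d (X ⟨1, one_pos⟩) = 0)
    (hx2 : d (X ⟨2, two_pos⟩) = X ⟨1, one_pos⟩)
    (hx : ∀ i : {n : ℕ // 0 < n}, ∀ h : 3 ≤ i.1,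
      d (X i) = (X (⟨i.1 - 1, by omega⟩ : {n : ℕ // 0 < n})) ^ 2) :
    (∀ p : RP, d (d p) = 0) ∧
    (∀ p : RP, d p = 0 → ∃ c : ZMod 2, ∃ q : RP, p = C c + d q) := by
  have hd : ∀ k, d (X (XiComplex.var (k + 1))) = monomial (XiComplex.uExp k) 1
    | 0 => hx2
    | k + 1 => by
      rw [hx (XiComplex.var (k + 2)) (by simp [XiComplex.var]), X_pow_eq_monomial]; rfl
  refine ⟨derivation_derivation_eq_zero_of_charTwo d (XiComplex.d_d_X_eq_zero hy hd),
    fun p hp => ⟨constantCoeff p, XiComplex.homotopy p, ?_⟩⟩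
  have h := XiComplex.d_homotopy_add_homotopy_d hy hd p
  rw [hp, map_zero, add_zero] at h
  linear_combination -h
end
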